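/- Let $B_1, B_2$ be $N \times N$ real matrices with $B_2$ symmetric positive semidefinite, $\tau \ge 0$, $q \in \mathbb{R}^N$, and $\lambda > 0$. Then $\left|\operatorname{tr}\big(B_1\big((B_2+\lambda I)^{-1} - (B_2 + \tau q q^\top + \lambda I)^{-1}\big)\big)\right| \le \frac{\|B_1\|_{op}}{\lambda}$, where $\|\cdot\|_{op}$ denotes the operator (spectral) norm. -/

import Mathlib

/-!
Put `A = B₂ + λ I` and `w = A⁻¹ q`. Sherman–Morrison gives
`(1 + τ qᵀw) · tr (B₁ (A⁻¹ - (A + τ q qᵀ)⁻¹)) = τ wᵀ B₁ w`.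
Since `qᵀw = wᵀ A w ≥ λ |w|²` and `|wᵀ B₁ w| ≤ ‖B₁‖ |w|²`, the trace is bounded by
`τ ‖B₁‖ |w|² / (1 + τ λ |w|²) ≤ ‖B₁‖ / λ`.
-/

open Matrix

namespace Matrix

section ShermanMorrison

variable {n α : Type*} [Fintype n] [DecidableEq n] [CommRing α] {u v : n → α}

theorem smul_vecMul_inv_add_vecMulVec {A : Matrix n n α} (hA : IsUnit A.det)
    (hM : IsUnit (A + vecMulVec u v).det) :
    (1 + v ⬝ᵥ A⁻¹ *ᵥ u) • (v ᵥ* (A + vecMulVec u v)⁻¹) = v ᵥ* A⁻¹ := by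
  have hleft : (v ᵥ* A⁻¹) ᵥ* (A + vecMulVec u v) = (1 + v ⬝ᵥ A⁻¹ *ᵥ u) • v := by
    rw [vecMul_add, vecMul_vecMul, nonsing_inv_mul _ hA, vecMul_one, vecMul_vecMulVec,
      ← dotProduct_mulVec, add_smul, one_smul]
  rw [← smul_vecMul, ← hleft, vecMul_vecMul, mul_nonsing_inv _ hM, vecMul_one]

theorem mul_trace_mul_inv_sub_inv_add_vecMulVec (B : Matrix n n α)
    {A : Matrix n n α} (hA : IsUnit A.det) (hM : IsUnit (A + vecMulVec u v).det) :
    (1 + v ⬝ᵥ A⁻¹ *ᵥ u) * trace (B * (A⁻¹ - (A + vecMulVec u v)⁻¹)) =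
      (v ᵥ* A⁻¹) ⬝ᵥ B *ᵥ A⁻¹ *ᵥ u := by
  have hdiff : A⁻¹ - (A + vecMulVec u v)⁻¹ =
      vecMulVec (A⁻¹ *ᵥ u) (v ᵥ* (A + vecMulVec u v)⁻¹) := by
    rw [inv_sub_inv (by simp [isUnit_iff_isUnit_det, hA, hM]), add_sub_cancel_left,
      mul_vecMulVec, vecMulVec_mul]
  rw [hdiff, mul_vecMulVec, trace_vecMulVec, ← smul_eq_mul, ← dotProduct_smul,
    smul_vecMul_inv_add_vecMulVec hA hM, dotProduct_comm]

end ShermanMorrison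

variable {n : Type*} [Fintype n] [DecidableEq n]

theorem abs_dotProduct_mulVec_le_opNorm_mul (A : Matrix n n ℝ) (x : n → ℝ) :
    |x ⬝ᵥ A *ᵥ x| ≤ ‖toEuclideanCLM (𝕜 := ℝ) A‖ * (x ⬝ᵥ x) := by
  set y : EuclideanSpace ℝ n := WithLp.toLp 2 x
  have hinner : x ⬝ᵥ A *ᵥ x = inner ℝ y (toEuclideanCLM (𝕜 := ℝ) A y) :=
    (inner_toEuclideanCLM A y y).symm
  have hnorm : x ⬝ᵥ x = ‖y‖ * ‖y‖ := by
    rw [← real_inner_self_eq_norm_mul_norm]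
    exact (EuclideanSpace.inner_toLp_toLp x x).symm
  calc |x ⬝ᵥ A *ᵥ x| ≤ ‖y‖ * ‖toEuclideanCLM (𝕜 := ℝ) A y‖ :=
        hinner ▸ abs_real_inner_le_norm _ _
    _ ≤ ‖y‖ * (‖toEuclideanCLM (𝕜 := ℝ) A‖ * ‖y‖) := by
        gcongr; exact ContinuousLinearMap.le_opNorm _ _
    _ = _ := by rw [hnorm]; ring

theorem mul_dotProduct_le_dotProduct_add_smul_one_mulVec {B : Matrix n n ℝ}
    (hB : B.PosSemidef) (l : ℝ) (x : n → ℝ) :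
    l * (x ⬝ᵥ x) ≤ x ⬝ᵥ (B + l • 1) *ᵥ x := by
  have := hB.dotProduct_mulVec_nonneg x
  simp only [star_trivial] at this
  rw [add_mulVec, dotProduct_add, smul_mulVec, one_mulVec, dotProduct_smul, smul_eq_mul]
  linarith

end Matrix

theorem abs_le_div_of_one_add_mul_mul_eq {T x c n K τ l : ℝ} (hτ : 0 ≤ τ) (hl : 0 < l)
    (hn : 0 ≤ n) (hK : 0 ≤ K) (hc : l * n ≤ c) (hx : |x| ≤ K * n)
    (h : (1 + τ * c) * T = τ * x) : |T| ≤ K / l := by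
  have hs : 0 < 1 + τ * c := by
    have : 0 ≤ c := le_trans (by positivity) hc
    positivity
  have habs : (1 + τ * c) * |T| = τ * |x| := by
    simpa only [abs_mul, abs_of_pos hs, abs_of_nonneg hτ] using congrArg abs h
  rw [le_div_iff₀ hl, ← mul_le_mul_iff_of_pos_left hs]
  calc (1 + τ * c) * (|T| * l) = l * (τ * |x|) := by rw [← habs]; ring
    _ ≤ l * (τ * (K * n)) := by gcongr
    _ = τ * K * (l * n) := by ring
    _ ≤ τ * K * c := by gcongr
    _ ≤ (1 + τ * c) * K := by nlinarith

/-- Trace bound for a rank-one perturbation of a resolvent (real version of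
Bai–Silverstein Lemma 2.10): the trace of `B₁` against the difference of resolvents
is bounded by the operator norm of `B₁` divided by `λ`. -/
theorem trace_resolvent_rank_one_bound (N : ℕ)
    (B₁ B₂ : Matrix (Fin N) (Fin N) ℝ) (hB₂ : B₂.PosSemidef)
    (τ : ℝ) (hτ : 0 ≤ τ) (q : Fin N → ℝ) (l : ℝ) (hl : 0 < l) :
    |Matrix.trace (B₁ *
        ((B₂ + l • (1 : Matrix (Fin N) (Fin N) ℝ))⁻¹ -
         (B₂ + τ • vecMulVec q q + l • (1 : Matrix (Fin N) (Fin N) ℝ))⁻¹))| ≤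
      ‖Matrix.toEuclideanCLM (𝕜 := ℝ) B₁‖ / l := by
  set A := B₂ + l • (1 : Matrix (Fin N) (Fin N) ℝ)
  have hA : A.PosDef := PosDef.posSemidef_add hB₂ (PosDef.one.smul hl)
  have hM : (A + vecMulVec (τ • q) q).PosDef := by
    rw [smul_vecMulVec]
    exact hA.add_posSemidef ((posSemidef_vecMulVec_self_star q).smul hτ)
  have hsymm : q ᵥ* A⁻¹ = A⁻¹ *ᵥ q := by
    rw [← vecMul_transpose, ← conjTranspose_eq_transpose_of_trivial, hA.inv.isHermitian.eq]
  set w := A⁻¹ *ᵥ q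
  have hquad : q ⬝ᵥ w = w ⬝ᵥ A *ᵥ w := by
    rw [mulVec_mulVec, mul_nonsing_inv _ hA.det_pos.ne'.isUnit, one_mulVec, dotProduct_comm]
  have hshermanMorrison := mul_trace_mul_inv_sub_inv_add_vecMulVec B₁ hA.det_pos.ne'.isUnit
    hM.det_pos.ne'.isUnit
  rw [mulVec_smul, mulVec_smul, dotProduct_smul, dotProduct_smul, hsymm, hquad,
    smul_eq_mul, smul_eq_mul] at hshermanMorrison
  rw [add_right_comm, ← smul_vecMulVec]
  exact abs_le_div_of_one_add_mul_mul_eq hτ hl (dotProduct_self_star_nonneg w) (norm_nonneg _)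
    (mul_dotProduct_le_dotProduct_add_smul_one_mulVec hB₂ l w)
    (abs_dotProduct_mulVec_le_opNorm_mul B₁ w) hshermanMorrison
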